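/- Suppose the zero set N := {(τ,j) ∈ ℤ^m × ℕ : ‖σ(τ,j)‖ = 0} is infinite, and let u : ℤ^m×ℕ → ℂ be the indicator function of N (u(τ,j) = 1 if (τ,j) ∈ N and u(τ,j) = 0 otherwise). Then u has GS-growth, u does not have GS-decay, and σ_r(τ,j)·u(τ,j) = 0 for every 1 ≤ r ≤ ℓ and every (τ,j); in particular, the system is not globally hypoelliptic at the Fourier coefficient level. -/

import Mathlib

open Real

/-- Euclidean norm of an integer vector `τ ∈ ℤ^m`. -/
noncomputable def eNormZ {m : ℕ} (τ : Fin m → ℤ) : ℝ :=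
  Real.sqrt (∑ i, ((τ i : ℝ)) ^ 2)

/-- The weight `w(τ,j) = ‖τ‖^(1/σ) + j^(1/(2nμ))`. -/
noncomputable def wgt (m n : ℕ) (σ μ : ℝ) (τ : Fin m → ℤ) (j : ℕ) : ℝ :=
  eNormZ τ ^ (1 / σ) + (j : ℝ) ^ (1 / (2 * n * μ))

/-- GS-decay: `|a(τ,j)| ≤ C exp(-ε w(τ,j))` for some `C, ε > 0`. -/
def GSDecay (m n : ℕ) (σ μ : ℝ) (a : (Fin m → ℤ) → ℕ → ℂ) : Prop :=
  ∃ C > 0, ∃ ε > 0, ∀ τ j, ‖a τ j‖ ≤ C * Real.exp (-ε * wgt m n σ μ τ j)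

/-- GS-growth: for all `ε > 0` there is `C > 0` with `|a(τ,j)| ≤ C exp(ε w(τ,j))`. -/
def GSGrowth (m n : ℕ) (σ μ : ℝ) (a : (Fin m → ℤ) → ℕ → ℂ) : Prop :=
  ∀ ε > 0, ∃ C > 0, ∀ τ j, ‖a τ j‖ ≤ C * Real.exp (ε * wgt m n σ μ τ j)

/-- Symbol of the operator `L_r = Q_r(D_t) + d_r P(x,D_x)`: `σ_r(τ,j) = Q_r(τ) + d_r λ_j`. -/
noncomputable def symb {m ℓ : ℕ} (Q : Fin ℓ → MvPolynomial (Fin m) ℂ)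
    (d : Fin ℓ → ℂ) (lam : ℕ → ℝ) (r : Fin ℓ) (τ : Fin m → ℤ) (j : ℕ) : ℂ :=
  MvPolynomial.eval (fun i => ((τ i : ℂ))) (Q r) + d r * (lam j : ℂ)

/-- `‖σ(τ,j)‖ = max_{1 ≤ r ≤ ℓ} |σ_r(τ,j)|`. -/
noncomputable def symbNorm {m ℓ : ℕ} (Q : Fin ℓ → MvPolynomial (Fin m) ℂ)
    (d : Fin ℓ → ℂ) (lam : ℕ → ℝ) (τ : Fin m → ℤ) (j : ℕ) : ℝ :=
  ⨆ r : Fin ℓ, ‖symb Q d lam r τ j‖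

/-- The Diophantine condition (DC). -/
def DioCond (m n ℓ : ℕ) (σ μ : ℝ) (Q : Fin ℓ → MvPolynomial (Fin m) ℂ)
    (d : Fin ℓ → ℂ) (lam : ℕ → ℝ) : Prop :=
  ∀ ε > 0, ∃ C > 0, ∀ τ j, symbNorm Q d lam τ j ≠ 0 →
    symbNorm Q d lam τ j ≥ C * Real.exp (-ε * wgt m n σ μ τ j)

/-- Global hypoellipticity at the Fourier coefficient level. -/
def GloballyHypoelliptic (m n ℓ : ℕ) (σ μ : ℝ) (Q : Fin ℓ → MvPolynomial (Fin m) ℂ)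
    (d : Fin ℓ → ℂ) (lam : ℕ → ℝ) : Prop :=
  ∀ u : (Fin m → ℤ) → ℕ → ℂ, GSGrowth m n σ μ u →
    (∀ r : Fin ℓ, GSDecay m n σ μ (fun τ j => symb Q d lam r τ j * u τ j)) →
    GSDecay m n σ μ u

/-- Admissible families (compatibility conditions). -/
def Admissible {m ℓ : ℕ} (Q : Fin ℓ → MvPolynomial (Fin m) ℂ) (d : Fin ℓ → ℂ)
    (lam : ℕ → ℝ) (f : Fin ℓ → (Fin m → ℤ) → ℕ → ℂ) : Prop :=
  (∀ r s τ j, symb Q d lam r τ j * f s τ j = symb Q d lam s τ j * f r τ j) ∧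
  (∀ r τ j, symb Q d lam r τ j = 0 → f r τ j = 0)

/-- Global solvability at the Fourier coefficient level. -/
def GloballySolvable (m n ℓ : ℕ) (σ μ : ℝ) (Q : Fin ℓ → MvPolynomial (Fin m) ℂ)
    (d : Fin ℓ → ℂ) (lam : ℕ → ℝ) : Prop :=
  ∀ f : Fin ℓ → (Fin m → ℤ) → ℕ → ℂ, Admissible Q d lam f →
    (∀ r, GSGrowth m n σ μ (f r)) →
    ∃ u : (Fin m → ℤ) → ℕ → ℂ, GSGrowth m n σ μ u ∧
      ∀ r τ j, symb Q d lam r τ j * u τ j = f r τ j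

/-! The indicator of the zero set is bounded, hence of GS-growth, and every symbol kills it. It
cannot have GS-decay: the weight has finite sublevel sets, so a GS-decaying sequence has modulus
below 1 off a finite set, whereas the indicator equals 1 on the infinite zero set. -/

lemma abs_le_eNormZ {m : ℕ} (τ : Fin m → ℤ) (i : Fin m) : |(τ i : ℝ)| ≤ eNormZ τ := by
  rw [eNormZ, ← Real.sqrt_sq_eq_abs]
  exact Real.sqrt_le_sqrt <|
    Finset.single_le_sum (f := fun k => (τ k : ℝ) ^ 2) (fun k _ => sq_nonneg _) (Finset.mem_univ i)

lemma finite_setOf_eNormZ_le (m : ℕ) (R : ℝ) : {τ : Fin m → ℤ | eNormZ τ ≤ R}.Finite := by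
  refine (Set.finite_Icc (fun _ => -⌈R⌉) fun _ => ⌈R⌉).subset fun τ hτ => ?_
  have hbound (i : Fin m) : |(τ i : ℝ)| ≤ ⌈R⌉ := (abs_le_eNormZ τ i).trans (hτ.trans (Int.le_ceil R))
  exact ⟨fun i => by exact_mod_cast (abs_le.mp (hbound i)).1,
    fun i => by exact_mod_cast (abs_le.mp (hbound i)).2⟩

lemma le_rpow_of_rpow_one_div_le {x K a : ℝ} (hx : 0 ≤ x) (ha : 0 < a) (h : x ^ (1 / a) ≤ K) :
    x ≤ K ^ a := by
  rw [one_div] at h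
  exact (Real.rpow_inv_le_iff_of_pos hx ((Real.rpow_nonneg hx _).trans h) ha).mp h

lemma wgt_nonneg (m n : ℕ) (σ μ : ℝ) (τ : Fin m → ℤ) (j : ℕ) : 0 ≤ wgt m n σ μ τ j :=
  add_nonneg (Real.rpow_nonneg (Real.sqrt_nonneg _) _) (Real.rpow_nonneg j.cast_nonneg _)

lemma finite_setOf_wgt_le (m n : ℕ) {σ μ : ℝ} (hσ : 0 < σ) (hnμ : 0 < 2 * n * μ) (K : ℝ) :
    {p : (Fin m → ℤ) × ℕ | wgt m n σ μ p.1 p.2 ≤ K}.Finite := by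
  refine ((finite_setOf_eNormZ_le m (K ^ σ)).prod
    (Set.finite_Iic ⌈K ^ (2 * n * μ)⌉₊)).subset fun ⟨τ, j⟩ hp => ?_
  have hτ : eNormZ τ ^ (1 / σ) ≤ K :=
    (le_add_of_nonneg_right (Real.rpow_nonneg j.cast_nonneg _)).trans hp
  have hj : (j : ℝ) ^ (1 / (2 * n * μ)) ≤ K :=
    (le_add_of_nonneg_left (Real.rpow_nonneg (Real.sqrt_nonneg _) _)).trans hp
  exact ⟨le_rpow_of_rpow_one_div_le (Real.sqrt_nonneg _) hσ hτ,
    Nat.cast_le.mp <| (le_rpow_of_rpow_one_div_le j.cast_nonneg hnμ hj).trans (Nat.le_ceil _)⟩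

lemma gsGrowth_of_norm_le {m n : ℕ} {σ μ M : ℝ} {a : (Fin m → ℤ) → ℕ → ℂ}
    (ha : ∀ τ j, ‖a τ j‖ ≤ M) : GSGrowth m n σ μ a := by
  intro ε hε
  refine ⟨max M 1, by positivity, fun τ j => ?_⟩
  calc ‖a τ j‖ ≤ max M 1 := (ha τ j).trans (le_max_left _ _)
    _ ≤ max M 1 * Real.exp (ε * wgt m n σ μ τ j) :=
      le_mul_of_one_le_right (by positivity)
        (Real.one_le_exp (mul_nonneg hε.le (wgt_nonneg m n σ μ τ j)))

lemma gsDecay_zero (m n : ℕ) (σ μ : ℝ) : GSDecay m n σ μ (fun _ _ => 0) :=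
  ⟨1, one_pos, 1, one_pos, fun _ _ => by simpa using (Real.exp_pos _).le⟩

lemma GSDecay.finite_setOf_one_le_norm {m n : ℕ} {σ μ : ℝ} (hσ : 0 < σ) (hnμ : 0 < 2 * n * μ)
    {a : (Fin m → ℤ) → ℕ → ℂ} (ha : GSDecay m n σ μ a) :
    {p : (Fin m → ℤ) × ℕ | 1 ≤ ‖a p.1 p.2‖}.Finite := by
  obtain ⟨C, hC, ε, hε, hbound⟩ := ha
  refine (finite_setOf_wgt_le m n hσ hnμ (Real.log C / ε)).subset fun ⟨τ, j⟩ hp => ?_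
  have h1 : 1 ≤ C * Real.exp (-(ε * wgt m n σ μ τ j)) := by
    simpa only [neg_mul] using hp.trans (hbound τ j)
  have hexp : Real.exp (ε * wgt m n σ μ τ j) ≤ C := by
    rwa [Real.exp_neg, ← div_eq_mul_inv, one_le_div (Real.exp_pos _)] at h1
  exact (le_div_iff₀ hε).mpr (by simpa [mul_comm] using (Real.le_log_iff_exp_le hC).mpr hexp)

lemma symb_eq_zero_of_symbNorm_eq_zero {m ℓ : ℕ} {Q : Fin ℓ → MvPolynomial (Fin m) ℂ}
    {d : Fin ℓ → ℂ} {lam : ℕ → ℝ} {τ : Fin m → ℤ} {j : ℕ}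
    (h : symbNorm Q d lam τ j = 0) (r : Fin ℓ) : symb Q d lam r τ j = 0 := by
  have hle : ‖symb Q d lam r τ j‖ ≤ symbNorm Q d lam τ j :=
    le_ciSup (f := fun r => ‖symb Q d lam r τ j‖) (Set.finite_range _).bddAbove r
  exact norm_eq_zero.mp (le_antisymm (h ▸ hle) (norm_nonneg _))

theorem statement8_general (m n ℓ : ℕ) (hn : 1 ≤ n)
    (σ μ : ℝ) (hσ : 1 ≤ σ) (hμ : 1 / 2 ≤ μ)
    (Q : Fin ℓ → MvPolynomial (Fin m) ℂ) (d : Fin ℓ → ℂ) (lam : ℕ → ℝ)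
    (hN : {p : (Fin m → ℤ) × ℕ | symbNorm Q d lam p.1 p.2 = 0}.Infinite)
    (u : (Fin m → ℤ) → ℕ → ℂ)
    (hu : ∀ τ j, u τ j = if symbNorm Q d lam τ j = 0 then 1 else 0) :
    GSGrowth m n σ μ u ∧ ¬ GSDecay m n σ μ u ∧
      (∀ (r : Fin ℓ) τ j, symb Q d lam r τ j * u τ j = 0) ∧
      ¬ GloballyHypoelliptic m n ℓ σ μ Q d lam := by
  have hσ0 : 0 < σ := by linarith
  have hnμ : 0 < 2 * n * μ := by
    have : (1 : ℝ) ≤ n := by exact_mod_cast hn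
    nlinarith
  have hannihilate (r : Fin ℓ) τ j : symb Q d lam r τ j * u τ j = 0 := by
    rw [hu]
    split_ifs with h
    · rw [symb_eq_zero_of_symbNorm_eq_zero h r, zero_mul]
    · rw [mul_zero]
  have hgrowth : GSGrowth m n σ μ u :=
    gsGrowth_of_norm_le (M := 1) fun τ j => by rw [hu]; split_ifs <;> simp
  have hnodecay : ¬ GSDecay m n σ μ u := fun hdecay =>
    hN <| (hdecay.finite_setOf_one_le_norm hσ0 hnμ).subset fun p hp => by simp [hu, hp.out]
  refine ⟨hgrowth, hnodecay, hannihilate, fun hGH => hnodecay (hGH u hgrowth fun r => ?_)⟩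
  simpa only [hannihilate r] using gsDecay_zero m n σ μ

/-- if the zero set `N` is infinite, then its indicator function has
GS-growth but not GS-decay, is annihilated by all the symbols, and hence the
system is not globally hypoelliptic. -/
theorem statement8 (m n ℓ : ℕ) (hm : 1 ≤ m) (hn : 1 ≤ n) (hℓ : 1 ≤ ℓ)
    (σ μ : ℝ) (hσ : 1 ≤ σ) (hμ : 1 / 2 ≤ μ)
    (Q : Fin ℓ → MvPolynomial (Fin m) ℂ) (d : Fin ℓ → ℂ) (lam : ℕ → ℝ)
    (hN : {p : (Fin m → ℤ) × ℕ | symbNorm Q d lam p.1 p.2 = 0}.Infinite)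
    (u : (Fin m → ℤ) → ℕ → ℂ)
    (hu : ∀ τ j, u τ j = if symbNorm Q d lam τ j = 0 then 1 else 0) :
    GSGrowth m n σ μ u ∧ ¬ GSDecay m n σ μ u ∧
      (∀ (r : Fin ℓ) τ j, symb Q d lam r τ j * u τ j = 0) ∧
      ¬ GloballyHypoelliptic m n ℓ σ μ Q d lam :=
  statement8_general m n ℓ hn σ μ hσ hμ Q d lam hN u hu
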